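/- arXiv:1311.6727 — 2 statements merged into one kernel-verified Lean document; each statement's English description precedes it below -/
import Mathlib

section
/- Let H = {u ∈ L²([0,2π], ℝ^d) : ∫₀^{2π} u = 0}, A ∈ so(d), and Q : H → H the self-adjoint operator with ⟨u, Qu⟩ = (1/2)∫₀^{2π} ⟨∫₀^t u(τ)dτ, A u(t)⟩ dt. For each k ≥ 1, the subspace T_k = ℝ^d ⊗ span{cos kt, sin kt} is invariant under Q, and in the orthonormal basis {e_i (1/√π)cos kt, e_i (1/√π)sin kt} the matrix of Q|_{T_k} is (1/k) times the 2d×2d block matrix with blocks [[0, A/2], [-A/2, 0]]. -/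
/-! The primitive `∫₀^t` of the wave with coordinates `(X, Y)` and frequency `k` is `1/k` times
the wave with coordinates `(-Y, X)` (the same wave shifted by a quarter period) plus a constant
vector. The constant integrates to zero against any wave of frequency `j ≥ 1`, and since
`{cos jt, sin jt}/√π` is orthonormal on `[0, 2π]`, two waves of frequencies `k` and `j` pair to
`δ_{jk}` times the pairing of their coordinates. Hence `q` vanishes between `T_k` and `T_j`, and on
`T_k` it equals `(X ⬝ AY' - Y ⬝ AX') / 2k`. -/

open Matrix MeasureTheory Real

/-- The quadratic/bilinear pairing `q(u,v) = (1/2)∫₀^{2π} ⟨∫₀^t u, A v(t)⟩ dt` associated to a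
skew-symmetric matrix `A` (the Hessian of the endpoint map of a step-two Carnot group). -/
noncomputable def qForm {d : ℕ} (A : Matrix (Fin d) (Fin d) ℝ) (u v : ℝ → (Fin d → ℝ)) : ℝ :=
  (1 / 2) * ∫ t in (0 : ℝ)..(2 * π), (∫ τ in (0 : ℝ)..t, u τ) ⬝ᵥ A.mulVec (v t)

/-- The element of the wave-number-`k` subspace `T_k = ℝ^d ⊗ span{cos kt, sin kt}` with
coordinates `(X, Y)` in the orthonormal basis `{eᵢ (1/√π) cos kt, eᵢ (1/√π) sin kt}`. -/
noncomputable def waveFn {d : ℕ} (k : ℕ) (X Y : Fin d → ℝ) : ℝ → (Fin d → ℝ) :=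
  fun t => (Real.sqrt π)⁻¹ • (Real.cos (k * t) • X + Real.sin (k * t) • Y)

theorem integral_cos_mul (a b : ℝ) {c : ℝ} (hc : c ≠ 0) :
    ∫ x in a..b, cos (c * x) = (sin (c * b) - sin (c * a)) / c := by
  rw [intervalIntegral.integral_comp_mul_left _ hc, integral_cos, smul_eq_mul, inv_mul_eq_div]

theorem integral_sin_mul (a b : ℝ) {c : ℝ} (hc : c ≠ 0) :
    ∫ x in a..b, sin (c * x) = (cos (c * a) - cos (c * b)) / c := by
  rw [intervalIntegral.integral_comp_mul_left _ hc, integral_sin, smul_eq_mul, inv_mul_eq_div]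

theorem integral_cos_int_mul_zero_two_pi (n : ℤ) :
    ∫ t in (0 : ℝ)..2 * π, cos (n * t) = if n = 0 then 2 * π else 0 := by
  split_ifs with hn
  · simp [hn]
  rw [integral_cos_mul _ _ (Int.cast_ne_zero.mpr hn), sin_periodic.int_mul_eq, mul_zero,
    sub_self, zero_div]

theorem integral_sin_int_mul_zero_two_pi (n : ℤ) :
    ∫ t in (0 : ℝ)..2 * π, sin (n * t) = 0 := by
  rcases eq_or_ne n 0 with rfl | hn
  · simp
  rw [integral_sin_mul _ _ (Int.cast_ne_zero.mpr hn), cos_int_mul_two_pi, mul_zero, cos_zero,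
    sub_self, zero_div]

theorem integral_cos_mul_cos_zero_two_pi {m : ℕ} (hm : m ≠ 0) (n : ℕ) :
    ∫ t in (0 : ℝ)..2 * π, cos (m * t) * cos (n * t) = if m = n then π else 0 := by
  have h (t : ℝ) : cos (m * t) * cos (n * t) =
      (cos (((m - n : ℤ) : ℝ) * t) + cos (((m + n : ℤ) : ℝ) * t)) / 2 := by
    push_cast
    rw [sub_mul, add_mul, ← two_mul_cos_mul_cos]
    ring
  simp_rw [h]
  rw [intervalIntegral.integral_div,
    intervalIntegral.integral_add (Continuous.intervalIntegrable (by fun_prop) _ _)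
      (Continuous.intervalIntegrable (by fun_prop) _ _),
    integral_cos_int_mul_zero_two_pi,
    integral_cos_int_mul_zero_two_pi]
  split_ifs <;> first | omega | ring

theorem integral_sin_mul_sin_zero_two_pi {m : ℕ} (hm : m ≠ 0) (n : ℕ) :
    ∫ t in (0 : ℝ)..2 * π, sin (m * t) * sin (n * t) = if m = n then π else 0 := by
  have h (t : ℝ) : sin (m * t) * sin (n * t) =
      (cos (((m - n : ℤ) : ℝ) * t) - cos (((m + n : ℤ) : ℝ) * t)) / 2 := by
    push_cast
    rw [sub_mul, add_mul, ← two_mul_sin_mul_sin]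
    ring
  simp_rw [h]
  rw [intervalIntegral.integral_div,
    intervalIntegral.integral_sub (Continuous.intervalIntegrable (by fun_prop) _ _)
      (Continuous.intervalIntegrable (by fun_prop) _ _),
    integral_cos_int_mul_zero_two_pi,
    integral_cos_int_mul_zero_two_pi]
  split_ifs <;> first | omega | ring

theorem integral_sin_mul_cos_zero_two_pi (m n : ℕ) :
    ∫ t in (0 : ℝ)..2 * π, sin (m * t) * cos (n * t) = 0 := by
  have h (t : ℝ) : sin (m * t) * cos (n * t) =
      (sin (((m - n : ℤ) : ℝ) * t) + sin (((m + n : ℤ) : ℝ) * t)) / 2 := by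
    push_cast
    rw [sub_mul, add_mul, ← two_mul_sin_mul_cos]
    ring
  simp_rw [h]
  rw [intervalIntegral.integral_div,
    intervalIntegral.integral_add (Continuous.intervalIntegrable (by fun_prop) _ _)
      (Continuous.intervalIntegrable (by fun_prop) _ _),
    integral_sin_int_mul_zero_two_pi,
    integral_sin_int_mul_zero_two_pi, add_zero, zero_div]

theorem integral_cos_mul_sin_zero_two_pi (m n : ℕ) :
    ∫ t in (0 : ℝ)..2 * π, cos (m * t) * sin (n * t) = 0 := by
  simp_rw [mul_comm (cos _)]
  exact integral_sin_mul_cos_zero_two_pi n m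

theorem dotProduct_mulVec_smul_add_smul {R m n : Type*} [CommRing R] [Fintype m] [Fintype n]
    (B : Matrix m n R) (a b c e : R) (u₁ u₂ : m → R) (v₁ v₂ : n → R) :
    (a • u₁ + b • u₂) ⬝ᵥ B *ᵥ (c • v₁ + e • v₂) =
      a * c * (u₁ ⬝ᵥ B *ᵥ v₁) + a * e * (u₁ ⬝ᵥ B *ᵥ v₂) + b * c * (u₂ ⬝ᵥ B *ᵥ v₁) +
        b * e * (u₂ ⬝ᵥ B *ᵥ v₂) := by
  simp only [mulVec_add, mulVec_smul, dotProduct_add, add_dotProduct, smul_dotProduct,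
    dotProduct_smul, smul_eq_mul]
  ring

@[fun_prop]
theorem continuous_waveFn {d : ℕ} (k : ℕ) (X Y : Fin d → ℝ) : Continuous (waveFn k X Y) := by
  unfold waveFn
  fun_prop

theorem integral_waveFn {d : ℕ} {k : ℕ} (hk : k ≠ 0) (X Y : Fin d → ℝ) (t : ℝ) :
    ∫ τ in (0 : ℝ)..t, waveFn k X Y τ = (k : ℝ)⁻¹ • (waveFn k (-Y) X t + (√π)⁻¹ • Y) := by
  have hk' : (k : ℝ) ≠ 0 := Nat.cast_ne_zero.mpr hk
  simp only [waveFn]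
  rw [intervalIntegral.integral_smul,
    intervalIntegral.integral_add (Continuous.intervalIntegrable (by fun_prop) _ _)
      (Continuous.intervalIntegrable (by fun_prop) _ _),
    intervalIntegral.integral_smul_const, intervalIntegral.integral_smul_const,
    integral_cos_mul _ _ hk', integral_sin_mul _ _ hk']
  ext i
  simp only [Pi.smul_apply, Pi.add_apply, Pi.neg_apply, smul_eq_mul, mul_zero, sin_zero, cos_zero]
  field_simp
  ring

theorem integral_dotProduct_mulVec_waveFn {d : ℕ} (B : Matrix (Fin d) (Fin d) ℝ) (c : Fin d → ℝ)
    {j : ℕ} (hj : j ≠ 0) (R S : Fin d → ℝ) :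
    ∫ t in (0 : ℝ)..2 * π, c ⬝ᵥ B *ᵥ waveFn j R S t = 0 := by
  simp only [waveFn, mulVec_smul, mulVec_add, dotProduct_smul, dotProduct_add, smul_eq_mul]
  rw [intervalIntegral.integral_const_mul,
    intervalIntegral.integral_add (Continuous.intervalIntegrable (by fun_prop) _ _)
      (Continuous.intervalIntegrable (by fun_prop) _ _),
    intervalIntegral.integral_mul_const, intervalIntegral.integral_mul_const,
    ← Int.cast_natCast j, integral_cos_int_mul_zero_two_pi, integral_sin_int_mul_zero_two_pi,
    if_neg (by exact_mod_cast hj)]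
  ring

theorem integral_waveFn_dotProduct_mulVec_waveFn {d : ℕ} (B : Matrix (Fin d) (Fin d) ℝ) {k : ℕ}
    (hk : k ≠ 0) (j : ℕ) (P Q R S : Fin d → ℝ) :
    ∫ t in (0 : ℝ)..2 * π, waveFn k P Q t ⬝ᵥ B *ᵥ waveFn j R S t =
      if k = j then P ⬝ᵥ B *ᵥ R + Q ⬝ᵥ B *ᵥ S else 0 := by
  have h (t : ℝ) : waveFn k P Q t ⬝ᵥ B *ᵥ waveFn j R S t =
      π⁻¹ * (cos (k * t) * cos (j * t) * (P ⬝ᵥ B *ᵥ R) +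
        cos (k * t) * sin (j * t) * (P ⬝ᵥ B *ᵥ S) + sin (k * t) * cos (j * t) * (Q ⬝ᵥ B *ᵥ R) +
        sin (k * t) * sin (j * t) * (Q ⬝ᵥ B *ᵥ S)) := by
    simp only [waveFn, smul_dotProduct, mulVec_smul, dotProduct_smul,
      dotProduct_mulVec_smul_add_smul, smul_eq_mul]
    rw [← mul_assoc, ← mul_inv, mul_self_sqrt pi_pos.le]
  simp_rw [h]
  simp (disch := exact Continuous.intervalIntegrable (by fun_prop) _ _) only
    [intervalIntegral.integral_const_mul, intervalIntegral.integral_add,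
    intervalIntegral.integral_mul_const]
  rw [integral_cos_mul_cos_zero_two_pi hk, integral_cos_mul_sin_zero_two_pi,
    integral_sin_mul_cos_zero_two_pi, integral_sin_mul_sin_zero_two_pi hk]
  split_ifs
  · field_simp
    ring
  · ring

theorem qForm_waveFn_waveFn {d : ℕ} (A : Matrix (Fin d) (Fin d) ℝ) {k j : ℕ} (hk : k ≠ 0)
    (hj : j ≠ 0) (X Y X' Y' : Fin d → ℝ) :
    qForm A (waveFn k X Y) (waveFn j X' Y') =
      if k = j then (2 * (k : ℝ))⁻¹ * (X ⬝ᵥ A *ᵥ Y' - Y ⬝ᵥ A *ᵥ X') else 0 := by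
  unfold qForm
  simp_rw [integral_waveFn hk, smul_dotProduct, add_dotProduct, smul_eq_mul]
  rw [intervalIntegral.integral_const_mul,
    intervalIntegral.integral_add (Continuous.intervalIntegrable (by fun_prop) _ _)
      (Continuous.intervalIntegrable (by fun_prop) _ _),
    integral_waveFn_dotProduct_mulVec_waveFn A hk, integral_dotProduct_mulVec_waveFn A _ hj]
  split_ifs
  · simp only [neg_dotProduct]
    ring
  · ring

theorem stmt_4_general {d : ℕ} (A : Matrix (Fin d) (Fin d) ℝ)
    (k j : ℕ) (hk : 1 ≤ k) (hj : 1 ≤ j)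
    (X Y X' Y' : Fin d → ℝ) :
    (j ≠ k → qForm A (waveFn k X Y) (waveFn j X' Y') = 0) ∧
    qForm A (waveFn k X Y) (waveFn k X' Y') =
      Sum.elim X Y ⬝ᵥ
        ((k : ℝ)⁻¹ •
          Matrix.fromBlocks 0 ((1 / 2 : ℝ) • A) (-((1 / 2 : ℝ) • A)) 0).mulVec
          (Sum.elim X' Y') := by
  have hk0 : k ≠ 0 := Nat.one_le_iff_ne_zero.mp hk
  refine ⟨fun hjk => ?_, ?_⟩
  · rw [qForm_waveFn_waveFn A hk0 (Nat.one_le_iff_ne_zero.mp hj), if_neg hjk.symm]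
  · rw [qForm_waveFn_waveFn A hk0 hk0, if_pos rfl, smul_mulVec, fromBlocks_mulVec]
    simp only [Sum.elim_comp_inl, Sum.elim_comp_inr, zero_mulVec, neg_mulVec, smul_mulVec,
      zero_add, add_zero, sumElim_dotProduct_sumElim, dotProduct_smul, dotProduct_neg,
      smul_eq_mul]
    ring

/-- Each subspace `T_k` is invariant under the operator `Q` associated to `q` (equivalently,
`T_k ⊥ T_j` for `q` when `j ≠ k`), and in the orthonormal basis
`{eᵢ (1/√π) cos kt, eᵢ (1/√π) sin kt}` the matrix of `Q|_{T_k}` is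
`(1/k)·[[0, A/2], [-A/2, 0]]`. -/
theorem stmt_4 {d : ℕ} (A : Matrix (Fin d) (Fin d) ℝ) (hA : Aᵀ = -A)
    (k j : ℕ) (hk : 1 ≤ k) (hj : 1 ≤ j)
    (X Y X' Y' : Fin d → ℝ) :
    (j ≠ k → qForm A (waveFn k X Y) (waveFn j X' Y') = 0) ∧
    qForm A (waveFn k X Y) (waveFn k X' Y') =
      Sum.elim X Y ⬝ᵥ
        ((k : ℝ)⁻¹ •
          Matrix.fromBlocks 0 ((1 / 2 : ℝ) • A) (-((1 / 2 : ℝ) • A)) 0).mulVec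
          (Sum.elim X' Y') :=
  stmt_4_general A k j hk hj X Y X' Y'
end

section
/- Let q be a nondegenerate quadratic form on ℝ^{n+1} with negative inertia index i⁻(q) = i, where 1 ≤ i ≤ n. Then the set Y = {x ∈ S^n : q(x) = 0} is homeomorphic to S^{i-1} × S^{n-i}. -/
/-! In Sylvester coordinates `(u, v) ∈ ℝ^i × ℝ^{n-i+1}` the form is `q = ‖v‖² - ‖u‖²`, so its
null cone is `{‖u‖ = ‖v‖}`. Radial projection `x ↦ x / ‖u‖` along this cone carries its
intersection with the Euclidean unit sphere onto its intersection with `{‖u‖ = 1}`, which is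
`{‖u‖ = ‖v‖ = 1} = S^{i-1} × S^{n-i}`. -/

open Metric

section Radial

variable {E : Type*} [AddCommGroup E] [Module ℝ E] {P : E → Prop} {N M : E → ℝ}
  (hP : ∀ c : ℝ, 0 < c → ∀ x, P x → P (c • x))
  (hN : ∀ c : ℝ, 0 < c → ∀ x, N (c • x) = c * N x)
  (hM : ∀ c : ℝ, 0 < c → ∀ x, M (c • x) = c * M x)

noncomputable def radialMap (hNM : ∀ x, P x → 0 < N x → 0 < M x)
    (x : {x // N x = 1 ∧ P x}) : {x // M x = 1 ∧ P x} :=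
  have hx : 0 < M x := hNM x x.2.2 (by rw [x.2.1]; exact one_pos)
  ⟨(M x)⁻¹ • (x : E), by rw [hM _ (inv_pos.2 hx), inv_mul_cancel₀ hx.ne'],
    hP _ (inv_pos.2 hx) _ x.2.2⟩

theorem continuous_radialMap [TopologicalSpace E] [ContinuousSMul ℝ E]
    (hNM : ∀ x, P x → 0 < N x → 0 < M x) (hMc : Continuous M) :
    Continuous (radialMap hP hM hNM) := by
  have hinv : Continuous fun x : {x // N x = 1 ∧ P x} => (M x)⁻¹ :=
    (hMc.comp continuous_subtype_val).inv₀ fun x =>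
      (hNM x x.2.2 (by rw [x.2.1]; exact one_pos)).ne'
  exact (hinv.smul continuous_subtype_val).subtype_mk _

theorem radialMap_radialMap (hNM : ∀ x, P x → 0 < N x → 0 < M x)
    (hMN : ∀ x, P x → 0 < M x → 0 < N x) (x : {x // N x = 1 ∧ P x}) :
    radialMap hP hN hMN (radialMap hP hM hNM x) = x := by
  have hx : 0 < M x := hNM x x.2.2 (by rw [x.2.1]; exact one_pos)
  refine Subtype.ext ?_
  change (N ((M x)⁻¹ • (x : E)))⁻¹ • (M x)⁻¹ • (x : E) = x
  rw [hN _ (inv_pos.2 hx), x.2.1, mul_one, inv_inv, smul_inv_smul₀ hx.ne']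

noncomputable def radialHomeomorph [TopologicalSpace E] [ContinuousSMul ℝ E]
    (hNc : Continuous N) (hMc : Continuous M) (hNM : ∀ x, P x → (0 < N x ↔ 0 < M x)) :
    {x // N x = 1 ∧ P x} ≃ₜ {x // M x = 1 ∧ P x} where
  toFun := radialMap hP hM fun x hx => (hNM x hx).1
  invFun := radialMap hP hN fun x hx => (hNM x hx).2
  left_inv := radialMap_radialMap hP hN hM _ _
  right_inv := radialMap_radialMap hP hM hN _ _
  continuous_toFun := continuous_radialMap hP hM _ hMc
  continuous_invFun := continuous_radialMap hP hN _ hNc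

end Radial

theorem nonempty_homeomorph_sphere_prod_sphere_of_eq_norm_sq_sub
    {E U V : Type*} [NormedAddCommGroup E] [NormedSpace ℝ E] [NormedAddCommGroup U]
    [NormedSpace ℝ U] [NormedAddCommGroup V] [NormedSpace ℝ V]
    (q : E → ℝ) (g : E ≃L[ℝ] U × V) (hq : ∀ x, q x = ‖(g x).2‖ ^ 2 - ‖(g x).1‖ ^ 2) :
    Nonempty ({x : E // ‖x‖ = 1 ∧ q x = 0} ≃ₜ sphere (0 : U) 1 × sphere (0 : V) 1) := by
  have hq0 : ∀ x, q x = 0 ↔ ‖(g x).1‖ = ‖(g x).2‖ := fun x => by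
    rw [hq, sub_eq_zero, eq_comm, sq_eq_sq₀ (norm_nonneg _) (norm_nonneg _)]
  have hcone : ∀ c : ℝ, 0 < c → ∀ x, q x = 0 → q (c • x) = 0 := fun c _ x hx => by
    rw [hq0] at hx ⊢
    rw [map_smul, Prod.smul_fst, Prod.smul_snd, norm_smul, norm_smul, hx]
  have hnorm : ∀ c : ℝ, 0 < c → ∀ x : E, ‖c • x‖ = c * ‖x‖ := fun c hc x => by
    rw [norm_smul, Real.norm_of_nonneg hc.le]
  have hnorm_fst : ∀ c : ℝ, 0 < c → ∀ x, ‖(g (c • x)).1‖ = c * ‖(g x).1‖ := fun c hc x => by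
    rw [map_smul, Prod.smul_fst, norm_smul, Real.norm_of_nonneg hc.le]
  have hpos : ∀ x, q x = 0 → (0 < ‖x‖ ↔ 0 < ‖(g x).1‖) := fun x hx => by
    rw [hq0] at hx
    have hgx : ‖g x‖ = ‖(g x).1‖ := by rw [Prod.norm_def, hx, max_self]
    rw [← hgx, norm_pos_iff, norm_pos_iff, ne_eq, ne_eq, g.map_eq_zero_iff]
  refine ⟨(radialHomeomorph hcone hnorm hnorm_fst continuous_norm
    (continuous_norm.comp (continuous_fst.comp g.continuous)) hpos).trans
    ((g.toHomeomorph.subtype fun x => ?_).trans (Homeomorph.Set.prod _ _))⟩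
  simp only [ContinuousLinearEquiv.coe_toHomeomorph, Set.mem_prod, mem_sphere_zero_iff_norm, hq0]
  exact and_congr_right fun (h : ‖(g x).1‖ = 1) => by rw [h, eq_comm]

theorem exists_weightedSumSquares_eq_norm_sq_sub {a b m : ℕ} (h : a + b = m) :
    ∃ g : (Fin m → ℝ) ≃L[ℝ] EuclideanSpace ℝ (Fin b) × EuclideanSpace ℝ (Fin a), ∀ y,
      QuadraticMap.weightedSumSquares ℝ (fun j : Fin m => if (j : ℕ) < a then (1 : ℝ) else -1) y
        = ‖(g y).2‖ ^ 2 - ‖(g y).1‖ ^ 2 := by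
  subst h
  let L : (Fin (a + b) → ℝ) ≃ₗ[ℝ] EuclideanSpace ℝ (Fin b) × EuclideanSpace ℝ (Fin a) :=
    LinearEquiv.funCongrLeft ℝ ℝ finSumFinEquiv ≪≫ₗ
      LinearEquiv.sumArrowLequivProdArrow _ _ ℝ ℝ ≪≫ₗ LinearEquiv.prodComm ℝ _ _ ≪≫ₗ
      (WithLp.linearEquiv 2 ℝ _).symm.prodCongr (WithLp.linearEquiv 2 ℝ _).symm
  refine ⟨L.toContinuousLinearEquiv, fun y => ?_⟩
  rw [QuadraticMap.weightedSumSquares_apply, Fin.sum_univ_add, EuclideanSpace.real_norm_sq_eq,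
    EuclideanSpace.real_norm_sq_eq]
  simp [L, sq, sub_eq_add_neg]

theorem stmt_13_general (n i : ℕ) (hin : i ≤ n)
    (q : QuadraticForm ℝ (EuclideanSpace ℝ (Fin (n + 1))))
    (hq : QuadraticMap.Equivalent q
      (QuadraticMap.weightedSumSquares ℝ
        (fun j : Fin (n + 1) => if (j : ℕ) < n + 1 - i then (1 : ℝ) else -1))) :
    Nonempty
      ({x : EuclideanSpace ℝ (Fin (n + 1)) // ‖x‖ = 1 ∧ q x = 0} ≃ₜ
        (Metric.sphere (0 : EuclideanSpace ℝ (Fin i)) 1 ×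
          Metric.sphere (0 : EuclideanSpace ℝ (Fin (n - i + 1))) 1)) := by
  obtain ⟨e⟩ := hq
  rw [Nat.sub_add_comm hin] at e
  obtain ⟨g, hg⟩ :=
    exists_weightedSumSquares_eq_norm_sq_sub (a := n - i + 1) (b := i) (m := n + 1) (by omega)
  exact nonempty_homeomorph_sphere_prod_sphere_of_eq_norm_sq_sub q
    (e.toLinearEquiv.toContinuousLinearEquiv.trans g) fun x => (e.map_app x).symm.trans (hg _)

/-- Let `q` be a nondegenerate quadratic form on `ℝ^{n+1}` with negative inertia index `i`
(encoded, via Sylvester's law, as equivalence with the weighted sum of squares having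
`n+1-i` weights `+1` and `i` weights `-1`), with `1 ≤ i ≤ n`. Then
`Y = {x ∈ Sⁿ : q(x) = 0}` is homeomorphic to `S^{i-1} × S^{n-i}`. -/
theorem stmt_13 (n i : ℕ) (hi1 : 1 ≤ i) (hin : i ≤ n)
    (q : QuadraticForm ℝ (EuclideanSpace ℝ (Fin (n + 1))))
    (hq : QuadraticMap.Equivalent q
      (QuadraticMap.weightedSumSquares ℝ
        (fun j : Fin (n + 1) => if (j : ℕ) < n + 1 - i then (1 : ℝ) else -1))) :
    Nonempty
      ({x : EuclideanSpace ℝ (Fin (n + 1)) // ‖x‖ = 1 ∧ q x = 0} ≃ₜ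
        (Metric.sphere (0 : EuclideanSpace ℝ (Fin i)) 1 ×
          Metric.sphere (0 : EuclideanSpace ℝ (Fin (n - i + 1))) 1)) :=
  stmt_13_general n i hin q hq
end
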